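/- arXiv:0806.4721 — 7 statements merged into one kernel-verified Lean document; each statement's English description precedes it below -/
import Mathlib

section
/- If a polynomial f : ℝ^n → ℝ is sos-convex, i.e., its Hessian factors as ∇²f(x) = F(x)ᵀF(x) for some matrix polynomial F, then f is first order sos convex: the polynomial in (x,u) given by f(x) - f(u) - ∇f(u)ᵀ(x-u) is a sum of squares of polynomials. -/
/-!
Restrict `f` to the segment `t ↦ u + t (x - u)`: this gives a polynomial `P(t)` over `ℝ[x, u]`
with `P(1) - P(0) - P'(0) = ∫₀¹ (1 - t) P''(t) dt`, and the Hessian factorization makes `P''` a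
sum of squares `∑ₗ qₗ(t)²`. The functional `p ↦ ∫₀¹ (1 - t) p(t) dt`, computed on coefficients,
sends `q²` to the quadratic form `∑ₐ,ᵦ H (a + b) qₐ qᵦ` of the Hankel matrix of moments
`H d = ∫₀¹ (1 - t) tᵈ dt`; this matrix is positive semidefinite, and factoring it as `Bᵀ B` writes
the form as a sum of squares.
-/

open MvPolynomial
open scoped Polynomial

open scoped MatrixOrder in
theorem Matrix.PosSemidef.isSumSq_sum_smul_mul {ι R : Type*} [Fintype ι] [CommSemiring R]
    [Algebra ℝ R] {H : Matrix ι ι ℝ} (hH : H.PosSemidef) (c : ι → R) :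
    IsSumSq (∑ a, ∑ b, H a b • (c a * c b)) := by
  classical
  obtain ⟨B, rfl⟩ := CStarAlgebra.nonneg_iff_eq_star_mul_self.mp hH.nonneg
  have hsq : ∑ a, ∑ b, (star B * B) a b • (c a * c b)
      = ∑ m, (∑ a, B m a • c a) * (∑ b, B m b • c b) := by
    simp only [Matrix.mul_apply, Matrix.star_apply, star_trivial, Finset.sum_smul,
      Finset.sum_mul_sum, smul_mul_smul_comm]
    exact (Finset.sum_congr rfl fun _ _ => Finset.sum_comm).trans Finset.sum_comm
  exact hsq ▸ IsSumSq.sum_mul_self _ _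

noncomputable def remainderWeight (d : ℕ) : ℝ := (((d : ℝ) + 1) * ((d : ℝ) + 2))⁻¹

theorem integral_one_sub_mul_pow (d : ℕ) :
    ∫ t in (0 : ℝ)..1, (1 - t) * t ^ d = remainderWeight d := by
  have hsub : ∀ t : ℝ, (1 - t) * t ^ d = t ^ d - t ^ (d + 1) := fun t => by ring
  simp only [hsub]
  rw [intervalIntegral.integral_sub (intervalIntegral.intervalIntegrable_pow _)
    (intervalIntegral.intervalIntegrable_pow _), integral_pow, integral_pow, remainderWeight]
  field_simp
  push_cast
  ring

open Matrix in
theorem posSemidef_remainderWeight_hankel (N : ℕ) :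
    (Matrix.of fun a b : Fin N => remainderWeight (a + b)).PosSemidef := by
  refine .of_dotProduct_mulVec_nonneg (by ext; simp [add_comm]) fun x => ?_
  have hexpand : ∀ t : ℝ, (1 - t) * (∑ a, x a * t ^ (a : ℕ)) ^ 2
      = ∑ a : Fin N, ∑ b : Fin N, (x a * x b) * ((1 - t) * t ^ ((a : ℕ) + b)) := fun t => by
    rw [sq, Finset.sum_mul_sum, Finset.mul_sum]
    refine Finset.sum_congr rfl fun _ _ => ?_
    rw [Finset.mul_sum]
    exact Finset.sum_congr rfl fun _ _ => by ring
  have hintegral : star x ⬝ᵥ (Matrix.of fun a b : Fin N => remainderWeight (a + b)) *ᵥ x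
      = ∫ t in (0 : ℝ)..1, (1 - t) * (∑ a, x a * t ^ (a : ℕ)) ^ 2 := by
    have hint : ∀ g : ℝ → ℝ, Continuous g → IntervalIntegrable g MeasureTheory.volume 0 1 :=
      fun g hg => hg.intervalIntegrable 0 1
    simp only [hexpand]
    rw [intervalIntegral.integral_finsetSum fun _ _ => hint _ (by fun_prop)]
    refine Finset.sum_congr rfl fun a _ => ?_
    rw [intervalIntegral.integral_finsetSum fun _ _ => hint _ (by fun_prop), mulVec, dotProduct,
      Finset.mul_sum]
    refine Finset.sum_congr rfl fun b _ => ?_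
    rw [intervalIntegral.integral_const_mul, integral_one_sub_mul_pow]
    simp only [star_trivial, of_apply]
    ring
  rw [hintegral]
  exact intervalIntegral.integral_nonneg zero_le_one fun t ht =>
    mul_nonneg (sub_nonneg.2 ht.2) (sq_nonneg _)

section RemainderFunctional

variable (R : Type*) [CommRing R] [Algebra ℝ R]

/-- `p ↦ ∫₀¹ (1 - t) p(t) dt`, written through the coefficients so that it makes sense over any
`ℝ`-algebra. -/
noncomputable def remainderFunctional : R[X] →ₗ[ℝ] R :=
  Polynomial.lsum fun d => remainderWeight d • LinearMap.id

variable {R}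

theorem remainderFunctional_monomial (d : ℕ) (c : R) :
    remainderFunctional R (Polynomial.monomial d c) = remainderWeight d • c := by
  simp [remainderFunctional, Polynomial.lsum_apply]

theorem remainderFunctional_derivative_derivative (P : R[X]) :
    remainderFunctional R (Polynomial.derivative (Polynomial.derivative P))
      = P.eval 1 - P.eval 0 - (Polynomial.derivative P).eval 0 := by
  induction P using Polynomial.induction_on' with
  | add p q hp hq => simp only [Polynomial.eval_add, map_add, hp, hq]; ring
  | monomial d c =>
    rcases d with _ | _ | d
    · simp
    · simp
    · have hcast : c * ((d : R) + 1 + 1) * ((d : R) + 1) = (remainderWeight d)⁻¹ • c := by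
        rw [remainderWeight, inv_inv, Algebra.smul_def]
        simp only [map_mul, map_add, map_natCast, map_one, map_ofNat]
        ring
      have hweight : remainderWeight d ≠ 0 := by unfold remainderWeight; positivity
      simp [remainderFunctional_monomial, hcast, hweight]

theorem isSumSq_remainderFunctional_mul_self (p : R[X]) :
    IsSumSq (remainderFunctional R (p * p)) := by
  have hp : p = ∑ a : Fin (p.natDegree + 1), Polynomial.monomial a (p.coeff a) := by
    rw [Fin.sum_univ_eq_sum_range (fun a => Polynomial.monomial a (p.coeff a))]
    exact p.as_sum_range' _ p.natDegree.lt_succ_self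
  rw [hp]
  simp only [Finset.sum_mul_sum, Polynomial.monomial_mul_monomial, map_sum,
    remainderFunctional_monomial]
  exact (posSemidef_remainderWeight_hankel _).isSumSq_sum_smul_mul fun a => p.coeff a

theorem IsSumSq.remainderFunctional {s : R[X]} (hs : IsSumSq s) :
    IsSumSq (remainderFunctional R s) := by
  induction hs with
  | zero => simp
  | sq_add a _ ih => rw [map_add]; exact (isSumSq_remainderFunctional_mul_self a).add ih

end RemainderFunctional

section Restriction

variable {ι S R : Type*} [CommSemiring S] [CommSemiring R] [Algebra S R]

theorem MvPolynomial.derivative_aeval [Fintype ι] (σ : ι → R[X]) (f : MvPolynomial ι S) :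
    Polynomial.derivative (aeval σ f)
      = ∑ i, aeval σ (pderiv i f) * Polynomial.derivative (σ i) := by
  classical
  induction f using MvPolynomial.induction_on with
  | C a => simp
  | add p q hp hq => simp only [map_add, hp, hq, add_mul, Finset.sum_add_distrib]
  | mul_X p i hp =>
    simp only [map_mul, aeval_X, Polynomial.derivative_mul, hp, Derivation.leibniz, pderiv_X,
      smul_eq_mul, map_add, add_mul, Finset.sum_add_distrib, Finset.sum_mul]
    rw [add_comm]
    congr 1
    · simp [Pi.single_apply]
    · exact Finset.sum_congr rfl fun _ _ => by ring

theorem Polynomial.eval_aeval_mvPolynomial (σ : ι → R[X]) (c : R) (f : MvPolynomial ι S) :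
    (MvPolynomial.aeval σ f).eval c = MvPolynomial.aeval (fun i => (σ i).eval c) f := by
  simpa using MvPolynomial.comp_aeval_apply (f := σ) ((Polynomial.aeval c).restrictScalars S) f

theorem MvPolynomial.isSumSq_derivative_derivative_aeval [Fintype ι] {κ : Type*} [Fintype κ]
    {f : MvPolynomial ι S} (F : Matrix κ ι (MvPolynomial ι S))
    (hHess : ∀ i j, pderiv i (pderiv j f) = ∑ l, F l i * F l j)
    (σ : ι → R[X]) (v : ι → R) (hσ : ∀ i, Polynomial.derivative (σ i) = Polynomial.C (v i)) :
    IsSumSq (Polynomial.derivative (Polynomial.derivative (aeval σ f))) := by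
  let q : κ → R[X] := fun l => ∑ i, aeval σ (F l i) * Polynomial.C (v i)
  suffices Polynomial.derivative (Polynomial.derivative (aeval σ f)) = ∑ l, q l * q l from
    this ▸ IsSumSq.sum_mul_self _ _
  simp only [derivative_aeval, hσ, map_sum, Polynomial.derivative_mul, Polynomial.derivative_C,
    mul_zero, add_zero, Finset.sum_mul, Finset.mul_sum, hHess, map_mul, q]
  refine (Finset.sum_congr rfl fun _ _ => Finset.sum_comm).trans Finset.sum_comm |>.trans ?_
  exact Finset.sum_congr rfl fun _ _ => Finset.sum_congr rfl fun _ _ =>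
    Finset.sum_congr rfl fun _ _ => by ring

end Restriction

/-- If a polynomial `f` in `n` variables is sos-convex, i.e. its Hessian factors as
`∇²f(x) = F(x)ᵀ F(x)` for a matrix polynomial `F`, then `f` is first order sos convex:
the polynomial `(x,u) ↦ f(x) - f(u) - ∇f(u)ᵀ(x-u)` is a sum of squares. -/
theorem sos_convex_implies_first_order_sos_convex
    (n k : ℕ) (f : MvPolynomial (Fin n) ℝ)
    (F : Matrix (Fin k) (Fin n) (MvPolynomial (Fin n) ℝ))
    (hHess : ∀ i j : Fin n,
      pderiv i (pderiv j f) = ∑ l : Fin k, F l i * F l j) :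
    IsSumSq ((rename Sum.inl f - rename Sum.inr f
      - ∑ i : Fin n, (rename Sum.inr (pderiv i f))
          * (X (Sum.inl i) - X (Sum.inr i)) :
        MvPolynomial (Fin n ⊕ Fin n) ℝ)) := by
  let v : Fin n → MvPolynomial (Fin n ⊕ Fin n) ℝ := fun i => X (Sum.inl i) - X (Sum.inr i)
  let line : Fin n → (MvPolynomial (Fin n ⊕ Fin n) ℝ)[X] :=
    fun i => Polynomial.C (X (Sum.inr i)) + Polynomial.X * Polynomial.C (v i)
  have hline : ∀ i, Polynomial.derivative (line i) = Polynomial.C (v i) := fun i => by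
    simp [line]
  have hline_one : ∀ g, (aeval line g).eval 1 = rename Sum.inl g := fun g => by
    rw [Polynomial.eval_aeval_mvPolynomial, rename_eq_aeval]
    congr 2 with i
    simp [line, v]
  have hline_zero : ∀ g, (aeval line g).eval 0 = rename Sum.inr g := fun g => by
    rw [Polynomial.eval_aeval_mvPolynomial, rename_eq_aeval]
    congr 2 with i
    simp [line]
  have hremainder := (isSumSq_derivative_derivative_aeval F hHess line v hline).remainderFunctional
  rw [remainderFunctional_derivative_derivative, derivative_aeval, hline_one, hline_zero,
    Polynomial.eval_finsetSum] at hremainder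
  simpa only [Polynomial.eval_mul, hline_zero, hline, Polynomial.eval_C] using hremainder
end

section
/- If f : ℝ^n → ℝ is a cubic polynomial that is concave on the nonnegative orthant ℝ₊ⁿ, then writing -∇²f(x) = A₀ + x₁A₁ + ⋯ + xₙAₙ for symmetric matrices A₀,…,Aₙ, every matrix Aᵢ (i = 0,…,n) is positive semidefinite. -/
/-!
On the ray `x = t • eᵢ` the negated Hessian is `A₀ + t Aᵢ`, positive semidefinite for all `t ≥ 0`.
At `t = 0` this gives `A₀`; dividing the quadratic form by `t` and letting `t → ∞` gives `Aᵢ`, and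
symmetry of `Aᵢ = (A₀ + Aᵢ) - A₀` comes for free.
-/

open MvPolynomial Matrix

section Pencil

variable {R : Type*} [Field R] [LinearOrder R] [IsStrictOrderedRing R]

lemma nonneg_of_forall_nonneg_add_mul {a b : R} (h : ∀ t : R, 0 ≤ t → 0 ≤ a + t * b) :
    0 ≤ b := by
  by_contra! hb
  have key := h ((|a| + 1) / -b) (div_nonneg (by positivity) (neg_nonneg.mpr hb.le))
  rw [div_mul_eq_mul_div, div_neg, mul_div_cancel_right₀ _ hb.ne] at key
  linarith [le_abs_self a]

variable [StarRing R] {n : Type*} [Fintype n]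

lemma Matrix.PosSemidef.of_forall_nonneg_add_smul {B A : Matrix n n R}
    (h : ∀ t : R, 0 ≤ t → (B + t • A).PosSemidef) : A.PosSemidef := by
  have hA : A.IsHermitian := by
    simpa using ((h 1 zero_le_one).isHermitian).sub (h 0 le_rfl).isHermitian
  refine .of_dotProduct_mulVec_nonneg hA fun v =>
    nonneg_of_forall_nonneg_add_mul (a := star v ⬝ᵥ (B *ᵥ v)) fun t ht => ?_
  simpa [add_mulVec, smul_mulVec, dotProduct_add, dotProduct_smul] using
    (h t ht).dotProduct_mulVec_nonneg v

lemma Matrix.PosSemidef.of_pencil_nonneg_orthant {ι : Type*} [Fintype ι] [DecidableEq ι]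
    {A₀ : Matrix n n R} {A : ι → Matrix n n R}
    (h : ∀ x : ι → R, 0 ≤ x → (A₀ + ∑ k, x k • A k).PosSemidef) :
    A₀.PosSemidef ∧ ∀ i, (A i).PosSemidef := by
  refine ⟨by simpa using h 0 le_rfl, fun i => .of_forall_nonneg_add_smul (B := A₀) fun t ht => ?_⟩
  simpa [Fintype.sum_single_smul] using h (Pi.single i t) (Pi.single_nonneg.mpr ht)

end Pencil

theorem cubic_concave_pencil_psd_general
    (n : ℕ) (f : MvPolynomial (Fin n) ℝ)
    (A₀ : Matrix (Fin n) (Fin n) ℝ) (A : Fin n → Matrix (Fin n) (Fin n) ℝ)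
    (hpencil : ∀ (x : Fin n → ℝ) (i j : Fin n),
      -(eval x (pderiv i (pderiv j f))) = (A₀ + ∑ k : Fin n, x k • A k) i j)
    (hconc : ∀ x : Fin n → ℝ, (∀ i, 0 ≤ x i) →
      (Matrix.of fun i j => -(eval x (pderiv i (pderiv j f)))).PosSemidef) :
    A₀.PosSemidef ∧ ∀ i, (A i).PosSemidef := by
  refine PosSemidef.of_pencil_nonneg_orthant fun x hx => ?_
  have hHessian : (Matrix.of fun i j => -(eval x (pderiv i (pderiv j f)))) =
      A₀ + ∑ k, x k • A k :=
    Matrix.ext (hpencil x)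
  exact hHessian ▸ hconc x hx

/-- If `f` is a cubic polynomial concave on the nonnegative orthant, and its negated
Hessian is written as the pencil `A₀ + x₁ A₁ + ⋯ + xₙ Aₙ` with symmetric `Aᵢ`, then
every `Aᵢ` is positive semidefinite. -/
theorem cubic_concave_pencil_psd
    (n : ℕ) (f : MvPolynomial (Fin n) ℝ) (hdeg : f.totalDegree ≤ 3)
    (A₀ : Matrix (Fin n) (Fin n) ℝ) (A : Fin n → Matrix (Fin n) (Fin n) ℝ)
    (hA₀ : A₀.IsSymm) (hA : ∀ i, (A i).IsSymm)
    (hpencil : ∀ (x : Fin n → ℝ) (i j : Fin n),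
      -(eval x (pderiv i (pderiv j f))) = (A₀ + ∑ k : Fin n, x k • A k) i j)
    (hconc : ∀ x : Fin n → ℝ, (∀ i, 0 ≤ x i) →
      (Matrix.of fun i j => -(eval x (pderiv i (pderiv j f)))).PosSemidef) :
    A₀.PosSemidef ∧ ∀ i, (A i).PosSemidef :=
  cubic_concave_pencil_psd_general n f A₀ A hpencil hconc
end

section
/- Let f be a univariate polynomial of degree at most 2d whose second derivative is nonnegative on [a,b]. Then there exist sum-of-squares univariate polynomials σ₀, σ₁, σ₂ such that f''(x) = σ₀(x) + (x-a)σ₁(x) + (b-x)σ₂(x) identically. -/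
/-!
Induction on the degree of a polynomial `p ≥ 0` on `[a, b]`. Every nonconstant such `p` has a
factor `q` that is positive on `[a, b]` off at most one point and satisfies `q · M ⊆ M`, where
`M` is the quadratic module generated by `X - a` and `b - X`: `X - r` for a root `r ≤ a`,
`r - X` for a root `r ≥ b`, `(X - r)²` for a root `a < r < b` (a local minimum of `p`, hence a
double root), and a positive definite quadratic for a non-real root. The quotient `p / q` is
again nonnegative on `[a, b]` by continuity. That `M` is closed under multiplication by the
generators rests on `(X - a) + (b - X) = b - a > 0`.
-/

open Polynomial Set

theorem Polynomial.isSumSq_C {c : ℝ} (hc : 0 ≤ c) : IsSumSq (C c : ℝ[X]) :=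
  IsSquare.isSumSq ⟨C √c, by rw [← C_mul, Real.mul_self_sqrt hc]⟩

/-- Membership in the quadratic module `Σ + (X - a) Σ + (b - X) Σ`, `Σ` the sums of squares. -/
def InQuadModule (a b : ℝ) (p : ℝ[X]) : Prop :=
  ∃ σ₀ σ₁ σ₂ : ℝ[X], IsSumSq σ₀ ∧ IsSumSq σ₁ ∧ IsSumSq σ₂ ∧
    p = σ₀ + (X - C a) * σ₁ + (C b - X) * σ₂

namespace InQuadModule

variable {a b : ℝ} {p q s : ℝ[X]}

theorem of_isSumSq (hs : IsSumSq s) : InQuadModule a b s :=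
  ⟨s, 0, 0, hs, .zero, .zero, by ring⟩

theorem X_sub_C_mul_of_isSumSq (hs : IsSumSq s) : InQuadModule a b ((X - C a) * s) :=
  ⟨0, s, 0, .zero, hs, .zero, by ring⟩

theorem C_sub_X_mul_of_isSumSq (hs : IsSumSq s) : InQuadModule a b ((C b - X) * s) :=
  ⟨0, 0, s, .zero, .zero, hs, by ring⟩

theorem add (hp : InQuadModule a b p) (hq : InQuadModule a b q) : InQuadModule a b (p + q) := by
  obtain ⟨σ₀, σ₁, σ₂, h₀, h₁, h₂, rfl⟩ := hp
  obtain ⟨τ₀, τ₁, τ₂, g₀, g₁, g₂, rfl⟩ := hq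
  exact ⟨σ₀ + τ₀, σ₁ + τ₁, σ₂ + τ₂, h₀.add g₀, h₁.add g₁, h₂.add g₂, by ring⟩

theorem isSumSq_mul (hs : IsSumSq s) (hp : InQuadModule a b p) : InQuadModule a b (s * p) := by
  obtain ⟨σ₀, σ₁, σ₂, h₀, h₁, h₂, rfl⟩ := hp
  exact ⟨s * σ₀, s * σ₁, s * σ₂, hs.mul h₀, hs.mul h₁, hs.mul h₂, by ring⟩

/-- Since `(X - a) + (b - X) = b - a`, the product `(X - a)(b - X)` is
`((X - a)(b - X)² + (b - X)(X - a)²) / (b - a)`. -/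
theorem X_sub_C_mul_C_sub_X_mul (hab : a < b) (hs : IsSumSq s) :
    InQuadModule a b ((X - C a) * (C b - X) * s) := by
  have hc : C (b - a)⁻¹ * (C b - C a) = (1 : ℝ[X]) := by
    rw [← C_sub, ← C_mul, inv_mul_cancel₀ (sub_ne_zero.2 hab.ne'), C_1]
  have hc₀ : IsSumSq (C (b - a)⁻¹ : ℝ[X]) := isSumSq_C (inv_nonneg.2 (sub_nonneg.2 hab.le))
  convert (X_sub_C_mul_of_isSumSq (hc₀.mul ((IsSumSq.mul_self (C b - X)).mul hs))).add
    (C_sub_X_mul_of_isSumSq (hc₀.mul ((IsSumSq.mul_self (X - C a)).mul hs))) using 1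
  linear_combination (-(X - C a) * (C b - X) * s) * hc

theorem X_sub_C_mul (hab : a < b) (hp : InQuadModule a b p) :
    InQuadModule a b ((X - C a) * p) := by
  obtain ⟨σ₀, σ₁, σ₂, h₀, h₁, h₂, rfl⟩ := hp
  convert ((X_sub_C_mul_of_isSumSq h₀).add (of_isSumSq ((IsSumSq.mul_self (X - C a)).mul h₁))).add
    (X_sub_C_mul_C_sub_X_mul hab h₂) using 1
  ring

theorem C_sub_X_mul (hab : a < b) (hp : InQuadModule a b p) :
    InQuadModule a b ((C b - X) * p) := by
  obtain ⟨σ₀, σ₁, σ₂, h₀, h₁, h₂, rfl⟩ := hp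
  convert ((C_sub_X_mul_of_isSumSq h₀).add (of_isSumSq ((IsSumSq.mul_self (C b - X)).mul h₂))).add
    (X_sub_C_mul_C_sub_X_mul hab h₁) using 1
  ring

theorem X_sub_C_mul_of_le {r : ℝ} (hab : a < b) (hr : r ≤ a) (hp : InQuadModule a b p) :
    InQuadModule a b ((X - C r) * p) := by
  convert (X_sub_C_mul hab hp).add (isSumSq_mul (isSumSq_C (sub_nonneg.2 hr)) hp) using 1
  rw [C_sub]; ring

theorem C_sub_X_mul_of_le {r : ℝ} (hab : a < b) (hr : b ≤ r) (hp : InQuadModule a b p) :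
    InQuadModule a b ((C r - X) * p) := by
  convert (C_sub_X_mul hab hp).add (isSumSq_mul (isSumSq_C (sub_nonneg.2 hr)) hp) using 1
  rw [C_sub]; ring

end InQuadModule

theorem forall_mem_Icc_nonneg_of_mul {a b r : ℝ} (hab : a < b) {q g : ℝ[X]}
    (hq : ∀ x ∈ Icc a b, x ≠ r → 0 < q.eval x) (hqg : ∀ x ∈ Icc a b, 0 ≤ (q * g).eval x) :
    ∀ x ∈ Icc a b, 0 ≤ g.eval x := by
  have hg : Ioo a b ∩ {r}ᶜ ⊆ {x | 0 ≤ g.eval x} := fun x ⟨hx, hxr⟩ ↦ by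
    have hx' := Ioo_subset_Icc_self hx
    exact nonneg_of_mul_nonneg_right (by simpa using hqg x hx') (hq x hx' hxr)
  calc Icc a b = closure (Ioo a b) := (closure_Ioo hab.ne).symm
    _ ⊆ closure (Ioo a b ∩ {r}ᶜ) := closure_minimal
      ((dense_compl_singleton r).open_subset_closure_inter isOpen_Ioo) isClosed_closure
    _ ⊆ {x | 0 ≤ g.eval x} :=
      closure_minimal hg (isClosed_le continuous_const (Polynomial.continuous g))

theorem Polynomial.sq_X_sub_C_dvd_of_isLocalMin {p : ℝ[X]} {r : ℝ} (hp : p ≠ 0)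
    (hr : p.IsRoot r) (hmin : IsLocalMin (fun x ↦ p.eval x) r) : (X - C r) ^ 2 ∣ p := by
  have hderiv : (derivative p).eval r = 0 := by
    simpa only [Polynomial.deriv] using hmin.deriv_eq_zero
  exact (le_rootMultiplicity_iff hp).1 ((one_lt_rootMultiplicity_iff_isRoot hp).2 ⟨hr, hderiv⟩)

theorem Polynomial.exists_isSumSq_dvd_of_forall_not_isRoot {p : ℝ[X]} (hp : 0 < p.natDegree)
    (hroot : ∀ r, ¬ p.IsRoot r) :
    ∃ q : ℝ[X], q ∣ p ∧ q.natDegree = 2 ∧ IsSumSq q ∧ ∀ x, 0 < q.eval x := by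
  obtain ⟨z, hz⟩ := IsAlgClosed.exists_aeval_eq_zero ℂ p (natDegree_pos_iff_degree_pos.1 hp).ne'
  have him : z.im ≠ 0 := fun him ↦ hroot z.re <| by
    rw [← Complex.re_add_im z, him, Complex.ofReal_zero, zero_mul, add_zero,
      ← Complex.coe_algebraMap, aeval_algebraMap_apply_eq_algebraMap_eval] at hz
    simpa using hz
  have hq : X ^ 2 - C (2 * z.re) * X + C (‖z‖ ^ 2) = (X - C z.re) ^ 2 + C (z.im ^ 2) := by
    rw [Complex.sq_norm, Complex.normSq_apply, C_mul, C_add, C_mul, C_mul, C_pow, C_ofNat]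
    ring
  refine ⟨(X - C z.re) ^ 2 + C (z.im ^ 2), ?_, ?_, ?_, fun x ↦ ?_⟩
  · exact hq ▸ p.quadratic_dvd_of_aeval_eq_zero_im_ne_zero hz him
  · compute_degree!
  · exact (IsSquare.sq _).isSumSq.add (isSumSq_C (sq_nonneg _))
  · simp only [eval_add, eval_pow, eval_sub, eval_X, eval_C]
    positivity

theorem exists_dvd_forall_inQuadModule_mul {a b : ℝ} (hab : a < b) {p : ℝ[X]}
    (hdeg : 0 < p.natDegree) (hp : ∀ x ∈ Icc a b, 0 ≤ p.eval x) :
    ∃ (q : ℝ[X]) (r : ℝ), q ∣ p ∧ 0 < q.natDegree ∧ (∀ x ∈ Icc a b, x ≠ r → 0 < q.eval x) ∧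
      ∀ g, InQuadModule a b g → InQuadModule a b (q * g) := by
  by_cases hroot : ∃ r, p.IsRoot r
  · obtain ⟨r, hr⟩ := hroot
    have hdvd : X - C r ∣ p := dvd_iff_isRoot.2 hr
    rcases le_or_gt r a with hra | har
    · refine ⟨X - C r, r, hdvd, by simp, fun x hx hxr ↦ ?_, fun g ↦ .X_sub_C_mul_of_le hab hra⟩
      simpa using lt_of_le_of_ne (hra.trans hx.1) (Ne.symm hxr)
    rcases le_or_gt b r with hbr | hrb
    · refine ⟨C r - X, r, ?_, ?_, fun x hx hxr ↦ ?_, fun g ↦ .C_sub_X_mul_of_le hab hbr⟩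
      · rwa [← neg_sub, neg_dvd]
      · rw [← neg_sub, natDegree_neg, natDegree_X_sub_C]; exact one_pos
      · simpa using lt_of_le_of_ne (hx.2.trans hbr) hxr
    have hmin : IsLocalMin (fun x ↦ p.eval x) r := by
      filter_upwards [Icc_mem_nhds har hrb] with x hx
      exact hr.eq_zero ▸ hp x hx
    refine ⟨(X - C r) ^ 2, r, sq_X_sub_C_dvd_of_isLocalMin (ne_zero_of_natDegree_gt hdeg) hr hmin,
      by simp, fun x _ hxr ↦ ?_, fun g ↦ .isSumSq_mul (IsSquare.sq _).isSumSq⟩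
    simpa using sq_pos_of_ne_zero (sub_ne_zero.2 hxr)
  · push Not at hroot
    obtain ⟨q, hdvd, hq₂, hq, hqpos⟩ := exists_isSumSq_dvd_of_forall_not_isRoot hdeg hroot
    exact ⟨q, a, hdvd, by omega, fun x _ _ ↦ hqpos x, fun g ↦ .isSumSq_mul hq⟩

theorem InQuadModule.of_forall_mem_Icc_nonneg {a b : ℝ} (hab : a < b) {p : ℝ[X]}
    (hp : ∀ x ∈ Icc a b, 0 ≤ p.eval x) : InQuadModule a b p := by
  induction hn : p.natDegree using Nat.strong_induction_on generalizing p with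
  | _ n ih =>
  rcases Nat.eq_zero_or_pos n with rfl | hn₀
  · have hC := eq_C_of_natDegree_eq_zero hn
    have hc := hp a (left_mem_Icc.2 hab.le)
    rw [hC, eval_C] at hc
    exact hC ▸ of_isSumSq (isSumSq_C hc)
  obtain ⟨q, r, ⟨g, rfl⟩, hq, hqpos, hqmul⟩ := exists_dvd_forall_inQuadModule_mul hab (hn ▸ hn₀) hp
  have hg₀ : g ≠ 0 := by rintro rfl; simp at hn; omega
  have hq₀ : q ≠ 0 := by rintro rfl; simp at hq
  have hg : g.natDegree < n := by rw [← hn, natDegree_mul hq₀ hg₀]; omega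
  exact hqmul g (ih _ hg (forall_mem_Icc_nonneg_of_mul hab hqpos hp) rfl)

theorem second_derivative_interval_sos_representation_general
    (f : Polynomial ℝ)
    (a b : ℝ) (hab : a < b)
    (hpos : ∀ x ∈ Set.Icc a b, 0 ≤ (derivative (derivative f)).eval x) :
    ∃ σ₀ σ₁ σ₂ : Polynomial ℝ, IsSumSq σ₀ ∧ IsSumSq σ₁ ∧ IsSumSq σ₂ ∧
      derivative (derivative f) = σ₀ + (X - C a) * σ₁ + (C b - X) * σ₂ :=
  InQuadModule.of_forall_mem_Icc_nonneg hab hpos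

/-- Powers–Reznick representation applied to `f''`: if `f` is a univariate polynomial
of degree at most `2d` whose second derivative is nonnegative on `[a,b]`, then
`f'' = σ₀ + (x-a)σ₁ + (b-x)σ₂` for sum-of-squares polynomials `σ₀, σ₁, σ₂`. -/
theorem second_derivative_interval_sos_representation
    (d : ℕ) (f : Polynomial ℝ) (hdeg : f.natDegree ≤ 2 * d)
    (a b : ℝ) (hab : a < b)
    (hpos : ∀ x ∈ Set.Icc a b, 0 ≤ (derivative (derivative f)).eval x) :
    ∃ σ₀ σ₁ σ₂ : Polynomial ℝ, IsSumSq σ₀ ∧ IsSumSq σ₁ ∧ IsSumSq σ₂ ∧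
      derivative (derivative f) = σ₀ + (X - C a) * σ₁ + (C b - X) * σ₂ :=
  second_derivative_interval_sos_representation_general f a b hab hpos
end

section
/- The set S = {(x₁,x₂) ∈ ℝ² : x₂ - x₁³ ≥ 0, x₁ ≥ 0} equals the projection onto (x₁,x₂) of the set {(x₁,x₂,u) ∈ ℝ³ : [[x₁, u],[u, x₂]] ⪰ 0 and [[1, x₁],[x₁, u]] ⪰ 0}. -/
/-!
A symmetric 2×2 matrix is positive semidefinite iff its diagonal entries and its determinant are
nonnegative. The second LMI says `u ≥ x₁²`, so the first gives `x₁⁴ ≤ u² ≤ x₁ x₂`, hence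
`x₁³ ≤ x₂` when `x₁ > 0` (when `x₁ = 0` this is the diagonal condition `x₂ ≥ 0`); conversely
`u = x₁²` lifts every point of the set.
-/

section BinaryForm

variable {R : Type*} [CommRing R] [LinearOrder R] [IsStrictOrderedRing R]

theorem binaryForm_nonneg_iff {a b c : R} :
    (∀ s t : R, 0 ≤ a * s * s + 2 * b * s * t + c * t * t) ↔ 0 ≤ a ∧ 0 ≤ c ∧ b ^ 2 ≤ a * c := by
  constructor
  · intro h
    have ha : 0 ≤ a := by simpa using h 1 0
    have hc : 0 ≤ c := by simpa using h 0 1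
    refine ⟨ha, hc, ?_⟩
    have ha_det : 0 ≤ a * (a * c - b ^ 2) := by nlinarith [h (-b) a]
    have hc_det : 0 ≤ c * (a * c - b ^ 2) := by nlinarith [h c (-b)]
    rcases ha.lt_or_eq with ha | rfl
    · linarith [nonneg_of_mul_nonneg_right ha_det ha]
    rcases hc.lt_or_eq with hc | rfl
    · nlinarith
    nlinarith [h 1 (-b)]
  · rintro ⟨ha, hc, hb⟩ s t
    rcases ha.lt_or_eq with ha | rfl
    · have : 0 ≤ a * (a * s * s + 2 * b * s * t + c * t * t) := by
        nlinarith [sq_nonneg (a * s + b * t), mul_nonneg (sub_nonneg.2 hb) (sq_nonneg t)]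
      exact nonneg_of_mul_nonneg_right (by linarith) ha
    · have hb : b = 0 := by nlinarith [sq_nonneg b]
      subst hb
      nlinarith [mul_nonneg hc (mul_self_nonneg t)]

end BinaryForm

namespace Matrix

variable {R : Type*} [CommRing R] [LinearOrder R] [IsStrictOrderedRing R] [StarRing R]
  [TrivialStar R]

theorem posSemidef_fin_two_iff {a b c : R} :
    (!![a, b; b, c] : Matrix (Fin 2) (Fin 2) R).PosSemidef ↔
      0 ≤ a ∧ 0 ≤ c ∧ b ^ 2 ≤ a * c := by
  have hermitian : (!![a, b; b, c] : Matrix (Fin 2) (Fin 2) R).IsHermitian := by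
    ext i j; fin_cases i <;> fin_cases j <;> simp
  rw [posSemidef_iff_dotProduct_mulVec, ← binaryForm_nonneg_iff]
  simp only [hermitian, true_and, Fin.forall_fin_succ_pi, Fin.forall_fin_zero_pi]
  refine forall₂_congr fun s t => ?_
  simp only [dotProduct, mulVec, Fin.sum_univ_two, star_trivial, of_apply,
    cons_val_zero, cons_val_one, Fin.cons_zero, Fin.cons_one]
  ring_nf

end Matrix

/-- The convex set `{x₂ - x₁³ ≥ 0, x₁ ≥ 0}` equals the projection of the lifted LMI set. -/
theorem sdp_representation_x2_ge_x1_cubed :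
    {p : ℝ × ℝ | p.2 - p.1^3 ≥ 0 ∧ p.1 ≥ 0}
      = {p : ℝ × ℝ | ∃ u : ℝ,
          (!![p.1, u; u, p.2] : Matrix (Fin 2) (Fin 2) ℝ).PosSemidef ∧
          (!![1, p.1; p.1, u] : Matrix (Fin 2) (Fin 2) ℝ).PosSemidef} := by
  ext ⟨x, y⟩
  simp only [Set.mem_ofPred_eq, Matrix.posSemidef_fin_two_iff, ge_iff_le, sub_nonneg]
  constructor
  · rintro ⟨hxy, hx⟩
    refine ⟨x ^ 2, ⟨hx, (pow_nonneg hx 3).trans hxy, ?_⟩, zero_le_one, sq_nonneg x, (one_mul _).ge⟩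
    calc (x ^ 2) ^ 2 = x * x ^ 3 := by ring
      _ ≤ x * y := mul_le_mul_of_nonneg_left hxy hx
  · rintro ⟨u, ⟨hx, hy, huxy⟩, -, -, hxu⟩
    refine ⟨?_, hx⟩
    rcases hx.lt_or_eq with hx | rfl
    · have : x * x ^ 3 ≤ x * y :=
        calc x * x ^ 3 = (x ^ 2) ^ 2 := by ring
          _ ≤ u ^ 2 := pow_le_pow_left₀ (sq_nonneg x) (by simpa using hxu) 2
          _ ≤ x * y := huxy
      exact le_of_mul_le_mul_left this hx
    · simpa using hy
end

section
/- The convex set {(x₁,x₂) ∈ ℝ² : x₁² - x₁³ - x₂² ≥ 0, x₁ ≥ 0} equals the set {(x₁,x₂) ∈ ℝ² : [[x₁, x₂, x₁],[x₂, x₁, 0],[x₁, 0, 1]] ⪰ 0}. -/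
/-!
Completing the square in the last coordinate gives
`vᵀ M v = (a - a²) v₀² + 2 b v₀ v₁ + a v₁² + (v₂ + a v₀)²`, so `M ⪰ 0` exactly when the binary
form with matrix `[[a - a², b], [b, a]]` (the Schur complement of the entry `1`) is nonnegative,
i.e. when `a - a² ≥ 0`, `a ≥ 0` and `b² ≤ (a - a²) a = a² - a³`. For `a ≥ 0` the last inequality
already forces `a ≤ 1` unless `a = 0`, hence `a - a² ≥ 0`.
-/

open Matrix

theorem binary_form_nonneg_iff {K : Type*} [Field K] [LinearOrder K] [IsStrictOrderedRing K]
    {p q r : K} :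
    (∀ x y : K, 0 ≤ p * x ^ 2 + 2 * q * x * y + r * y ^ 2) ↔ 0 ≤ p ∧ 0 ≤ r ∧ q ^ 2 ≤ p * r := by
  constructor
  · intro h
    have hdisc : discrim p (2 * q) r ≤ 0 := discrim_le_zero fun x => by
      simpa [sq, mul_assoc, mul_comm, mul_left_comm] using h x 1
    refine ⟨by simpa using h 1 0, by simpa using h 0 1, ?_⟩
    rw [discrim] at hdisc
    linarith
  · rintro ⟨hp, hr, hqr⟩ x y
    rcases hp.lt_or_eq with hp_pos | rfl
    · have hsq : p * (p * x ^ 2 + 2 * q * x * y + r * y ^ 2)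
          = (p * x + q * y) ^ 2 + (p * r - q ^ 2) * y ^ 2 := by ring
      refine nonneg_of_mul_nonneg_right ?_ hp_pos
      rw [hsq]
      have hdet : 0 ≤ p * r - q ^ 2 := sub_nonneg.mpr hqr
      positivity
    · obtain rfl : q = 0 := by simpa using hqr
      simpa using mul_nonneg hr (sq_nonneg y)

theorem quadForm_singularCubicPencil (a b : ℝ) (v : Fin 3 → ℝ) :
    star v ⬝ᵥ (!![a, b, a; b, a, 0; a, 0, 1] *ᵥ v)
      = (a - a ^ 2) * v 0 ^ 2 + 2 * b * v 0 * v 1 + a * v 1 ^ 2 + (v 2 + a * v 0) ^ 2 := by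
  simp [dotProduct, mulVec, Fin.sum_univ_three]
  ring

theorem posSemidef_singularCubicPencil_iff (a b : ℝ) :
    (!![a, b, a; b, a, 0; a, 0, 1] : Matrix (Fin 3) (Fin 3) ℝ).PosSemidef
      ↔ ∀ x y : ℝ, 0 ≤ (a - a ^ 2) * x ^ 2 + 2 * b * x * y + a * y ^ 2 := by
  rw [posSemidef_iff_dotProduct_mulVec]
  constructor
  · rintro ⟨-, h⟩ x y
    have hv := h ![x, y, -(a * x)]
    rw [quadForm_singularCubicPencil] at hv
    simpa using hv
  · intro h
    refine ⟨?_, fun v => ?_⟩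
    · ext i j
      fin_cases i <;> fin_cases j <;> simp
    · rw [quadForm_singularCubicPencil]
      exact add_nonneg (h _ _) (sq_nonneg _)

theorem singularCubic_iff (a b : ℝ) :
    (a ^ 2 - a ^ 3 - b ^ 2 ≥ 0 ∧ a ≥ 0) ↔ 0 ≤ a - a ^ 2 ∧ 0 ≤ a ∧ b ^ 2 ≤ (a - a ^ 2) * a := by
  have hprod : (a - a ^ 2) * a = a ^ 2 - a ^ 3 := by ring
  constructor
  · rintro ⟨hcubic, ha⟩
    have hle : a - a ^ 2 ≥ 0 := by
      rcases ha.lt_or_eq with ha | rfl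
      · nlinarith [sq_nonneg b]
      · simp
    exact ⟨hle, ha, by linarith⟩
  · rintro ⟨-, ha, hb⟩
    exact ⟨by linarith, ha⟩

/-- Exact LMI representation of the singular convex set
`{x₁² - x₁³ - x₂² ≥ 0, x₁ ≥ 0}`. -/
theorem lmi_representation_singular_cubic :
    {p : ℝ × ℝ | p.1^2 - p.1^3 - p.2^2 ≥ 0 ∧ p.1 ≥ 0}
      = {p : ℝ × ℝ |
          (!![p.1, p.2, p.1; p.2, p.1, 0; p.1, 0, 1] :
            Matrix (Fin 3) (Fin 3) ℝ).PosSemidef} := by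
  ext ⟨a, b⟩
  simp only [Set.mem_ofPred_eq]
  rw [singularCubic_iff, posSemidef_singularCubicPencil_iff, binary_form_nonneg_iff]
end

section
/- The polynomial p(x₁,x₂,u₁,u₂) = u₁²u₂² + x₁²x₂u₂ + x₁x₂²u₁ - 3x₁x₂u₁u₂ cannot be written in the form ∑_{ν∈{0,1}², μ∈{0,1}²} x₁^{ν₁}x₂^{ν₂}u₁^{μ₁}u₂^{μ₂} σ_{ν,μ}(x,u) with all σ_{ν,μ} sums of squares of polynomials. -/
/-!
Substituting `(x₁, x₂, u₁, u₂) ↦ (x², y², 1, 1)` turns every `x^ν u^μ` into a square, so a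
representation would make the Motzkin polynomial `M = 1 + x⁴y² + x²y⁴ - 3x²y²` a sum of squares
`∑ qᵢ²`. For an integer weight `w`, the top `w`-components of the `qᵢ` have squares summing to a
component of `M`, and a sum of squares of nonzero real polynomials is nonzero; so every monomial
of every `qᵢ` lies in half the Newton polygon of `M`, whose only lattice points are `1, xy, x²y,
xy²`. Then the coefficient of `x²y²` in `∑ qᵢ²` is `∑ (coeff_{xy} qᵢ)² ≥ 0`, whereas in `M` it
is `-3`.
-/

theorem IsSumSq.map {R S : Type*} [Semiring R] [Semiring S] (f : R →+* S) {s : R}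
    (hs : IsSumSq s) : IsSumSq (f s) := by
  induction hs with
  | zero => simp
  | sq_add a _ ih => simpa using IsSumSq.sq_add (f a) ih

theorem IsSumSq.exists_fin_sum_mul_self {R : Type*} [AddCommMonoid R] [Mul R] {s : R}
    (hs : IsSumSq s) : ∃ (n : ℕ) (a : Fin n → R), s = ∑ i, a i * a i := by
  induction hs with
  | zero => exact ⟨0, Fin.elim0, by simp⟩
  | sq_add a _ ih =>
    obtain ⟨n, b, rfl⟩ := ih
    exact ⟨n + 1, Fin.cons a b, by simp [Fin.sum_univ_succ]⟩

namespace MvPolynomial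

open Finsupp (single weight)

variable {σ R : Type*}

section CommSemiring

variable [CommSemiring R]

theorem coeff_add_self_mul_self {q : MvPolynomial σ R} {m : σ →₀ ℕ}
    (h : ∀ a ∈ q.support, ∀ b ∈ q.support, a + b = m + m → a = m) :
    coeff (m + m) (q * q) = coeff m q * coeff m q := by
  classical
  rw [coeff_mul, Finset.sum_eq_single (m, m)]
  · rintro ⟨a, b⟩ hab hne
    rw [Finset.HasAntidiagonal.mem_antidiagonal] at hab
    by_contra hc
    obtain rfl := h a (mem_support_iff.mpr (left_ne_zero_of_mul hc)) b
      (mem_support_iff.mpr (right_ne_zero_of_mul hc)) hab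
    exact hne (by simpa using hab)
  · simp

theorem weightedHomogeneousComponent_mul_self_of_weight_le {w : σ → ℤ} {E : ℤ}
    {q : MvPolynomial σ R} (hq : ∀ m ∈ q.support, weight w m ≤ E) :
    weightedHomogeneousComponent w (E + E) (q * q) =
      weightedHomogeneousComponent w E q * weightedHomogeneousComponent w E q := by
  classical
  ext n
  simp only [coeff_weightedHomogeneousComponent, coeff_mul]
  split_ifs with hn
  · refine Finset.sum_congr rfl fun ⟨a, b⟩ hab => ?_
    rw [Finset.HasAntidiagonal.mem_antidiagonal] at hab
    dsimp only at hab ⊢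
    have hw : weight w a + weight w b = E + E := by rw [← map_add, hab, hn]
    by_cases ha : coeff a q = 0
    · simp [ha]
    by_cases hb : coeff b q = 0
    · simp [hb]
    have ha' := hq a (mem_support_iff.mpr ha)
    have hb' := hq b (mem_support_iff.mpr hb)
    rw [if_pos (by omega), if_pos (by omega)]
  · refine (Finset.sum_eq_zero fun ⟨a, b⟩ hab => ?_).symm
    rw [Finset.HasAntidiagonal.mem_antidiagonal] at hab
    dsimp only at hab ⊢
    have hw : weight w a + weight w b ≠ E + E := by rwa [← map_add, hab]
    split_ifs <;> first | simp | omega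

end CommSemiring

section Ordered

variable [CommRing R] [LinearOrder R] [IsStrictOrderedRing R] {ι : Type*} [Fintype ι]

theorem eq_zero_of_sum_mul_self_eq_zero {q : ι → MvPolynomial σ R}
    (h : ∑ i, q i * q i = 0) (i : ι) : q i = 0 := by
  refine funext fun x => ?_
  have hx : ∑ i, eval x (q i) * eval x (q i) = 0 := by simpa using congrArg (eval x) h
  simpa using (Finset.sum_eq_zero_iff_of_nonneg fun i _ => mul_self_nonneg _).mp hx i
    (Finset.mem_univ i)

theorem weight_le_of_sum_mul_self_weight_le {q : ι → MvPolynomial σ R} {w : σ → ℤ} {D : ℤ}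
    (hp : ∀ n ∈ (∑ i, q i * q i).support, weight w n ≤ D + D) (i : ι)
    (m : σ →₀ ℕ) (hm : m ∈ (q i).support) : weight w m ≤ D := by
  classical
  set U := Finset.univ.biUnion fun i => (q i).support
  obtain ⟨m₀, hm₀U, hmax⟩ := U.exists_max_image (weight w)
    ⟨m, Finset.mem_biUnion.mpr ⟨i, Finset.mem_univ _, hm⟩⟩
  obtain ⟨i₀, -, hm₀⟩ := Finset.mem_biUnion.mp hm₀U
  set E := weight w m₀
  have hle (j : ι) : ∀ a ∈ (q j).support, weight w a ≤ E := fun a ha =>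
    hmax a (Finset.mem_biUnion.mpr ⟨j, Finset.mem_univ _, ha⟩)
  refine le_trans (hle i m hm) (not_lt.mp fun hDE => ?_)
  have htop : ∑ j, weightedHomogeneousComponent w E (q j) *
      weightedHomogeneousComponent w E (q j) = 0 := by
    simp_rw [← weightedHomogeneousComponent_mul_self_of_weight_le (hle _), ← map_sum]
    exact weightedHomogeneousComponent_eq_zero' _ _ fun n hn => by have := hp n hn; omega
  have := congrArg (coeff m₀) (eq_zero_of_sum_mul_self_eq_zero htop i₀)
  rw [coeff_weightedHomogeneousComponent, if_pos rfl] at this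
  exact mem_support_iff.mp hm₀ this

end Ordered

theorem weight_fin_two (w : Fin 2 → ℤ) (a : Fin 2 →₀ ℕ) :
    weight w a = a 0 * w 0 + a 1 * w 1 := by
  simp [Finsupp.weight_eq_sum, Fin.sum_univ_two]

theorem coeff_two_two_mul_self [CommSemiring R] {q : MvPolynomial (Fin 2) R}
    (hq : ∀ m ∈ q.support, m 0 + m 1 ≤ 3 ∧ m 0 ≤ 2 * m 1 ∧ m 1 ≤ 2 * m 0) :
    coeff (single 0 2 + single 1 2) (q * q) =
      coeff (single 0 1 + single 1 1) q * coeff (single 0 1 + single 1 1) q := by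
  rw [show single (0 : Fin 2) 2 + single 1 2 =
      (single 0 1 + single 1 1) + (single 0 1 + single 1 1) by
    simp [Finsupp.ext_iff, Fin.forall_fin_two]]
  refine coeff_add_self_mul_self fun a ha b hb hab => ?_
  have ha' := hq a ha
  have hb' := hq b hb
  rw [Finsupp.ext_iff, Fin.forall_fin_two] at hab ⊢
  simp only [Finsupp.coe_add, Pi.add_apply, Finsupp.single_eq_same,
    Finsupp.single_eq_of_ne zero_ne_one, Finsupp.single_eq_of_ne one_ne_zero] at hab ⊢
  omega

section Motzkin

variable [CommRing R]

variable (R) in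
noncomputable def motzkin : MvPolynomial (Fin 2) R :=
  1 + X 0 ^ 4 * X 1 ^ 2 + X 0 ^ 2 * X 1 ^ 4 - 3 * X 0 ^ 2 * X 1 ^ 2

theorem motzkin_eq_sum_monomial : motzkin R =
    1 + monomial (single 0 4 + single 1 2) 1 + monomial (single 0 2 + single 1 4) 1 -
      monomial (single 0 2 + single 1 2) 3 := by
  rw [motzkin, show (3 : MvPolynomial (Fin 2) R) = C 3 from (map_ofNat C 3).symm]
  simp only [X_pow_eq_monomial, monomial_mul, C_mul_monomial, mul_one]

theorem mem_support_motzkin {n : Fin 2 →₀ ℕ} (hn : n ∈ (motzkin R).support) :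
    n = 0 ∨ n = single 0 4 + single 1 2 ∨ n = single 0 2 + single 1 4 ∨
      n = single 0 2 + single 1 2 := by
  contrapose! hn
  obtain ⟨h₀, h₁, h₂, h₃⟩ := hn
  simp [motzkin_eq_sum_monomial, coeff_monomial, coeff_one, Ne.symm h₀, Ne.symm h₁, Ne.symm h₂,
    Ne.symm h₃]

theorem coeff_motzkin_two_two : coeff (single 0 2 + single 1 2) (motzkin R) = -3 := by
  rw [motzkin_eq_sum_monomial]
  simp [coeff_monomial, coeff_one, Finsupp.ext_iff, Fin.forall_fin_two]

variable [LinearOrder R] [IsStrictOrderedRing R]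

theorem exponent_bounds_of_motzkin_eq_sum_mul_self {ι : Type*} [Fintype ι]
    {q : ι → MvPolynomial (Fin 2) R} (hq : motzkin R = ∑ i, q i * q i) (i : ι)
    {m : Fin 2 →₀ ℕ} (hm : m ∈ (q i).support) :
    m 0 + m 1 ≤ 3 ∧ m 0 ≤ 2 * m 1 ∧ m 1 ≤ 2 * m 0 := by
  have hbound (w : Fin 2 → ℤ) (D : ℤ) (hD : ∀ n ∈ (motzkin R).support, weight w n ≤ D + D) :
      weight w m ≤ D :=
    weight_le_of_sum_mul_self_weight_le (hq ▸ hD) i m hm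
  -- weights normal to the three edges of the Newton polygon of `motzkin`
  have h₁ := hbound ![1, 1] 3 ?_
  have h₂ := hbound ![1, -2] 0 ?_
  have h₃ := hbound ![-2, 1] 0 ?_
  · simp only [weight_fin_two, Matrix.cons_val_zero, Matrix.cons_val_one, Matrix.cons_val_fin_one]
      at h₁ h₂ h₃
    omega
  all_goals
    intro n hn
    rcases mem_support_motzkin hn with rfl | rfl | rfl | rfl <;> simp [weight_fin_two]

theorem not_isSumSq_motzkin : ¬ IsSumSq (motzkin R) := by
  intro h
  obtain ⟨k, q, hq⟩ := h.exists_fin_sum_mul_self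
  have hdiag (i : Fin k) : coeff (single 0 2 + single 1 2) (q i * q i) =
      coeff (single 0 1 + single 1 1) (q i) * coeff (single 0 1 + single 1 1) (q i) :=
    coeff_two_two_mul_self fun m hm => exponent_bounds_of_motzkin_eq_sum_mul_self hq i hm
  have h22 := coeff_motzkin_two_two (R := R)
  rw [hq, coeff_sum] at h22
  simp only [hdiag] at h22
  linarith [Finset.sum_nonneg fun i (_ : i ∈ Finset.univ) =>
    mul_self_nonneg (coeff (single 0 1 + single 1 1) (q i))]

end Motzkin

end MvPolynomial

open MvPolynomial

/-- The polynomial `u₁²u₂² + x₁²x₂u₂ + x₁x₂²u₁ - 3x₁x₂u₁u₂` (variables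
`X 0 = x₁, X 1 = x₂, X 2 = u₁, X 3 = u₂`) has no preordering representation
`∑_{ν,μ} x₁^{ν₁}x₂^{ν₂}u₁^{μ₁}u₂^{μ₂} σ_{ν,μ}` with all `σ_{ν,μ}` sums of squares. -/
theorem no_preordering_representation :
    ¬ ∃ σ : Bool → Bool → Bool → Bool → MvPolynomial (Fin 4) ℝ,
      (∀ ν₁ ν₂ μ₁ μ₂, IsSumSq (σ ν₁ ν₂ μ₁ μ₂)) ∧
      (X 2)^2 * (X 3)^2 + (X 0)^2 * (X 1) * (X 3) + (X 0) * (X 1)^2 * (X 2)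
          - 3 * (X 0) * (X 1) * (X 2) * (X 3)
        = ∑ ν₁ : Bool, ∑ ν₂ : Bool, ∑ μ₁ : Bool, ∑ μ₂ : Bool,
            (if ν₁ then X 0 else 1) * (if ν₂ then X 1 else 1) *
            (if μ₁ then X 2 else 1) * (if μ₂ then X 3 else 1) * σ ν₁ ν₂ μ₁ μ₂ := by
  rintro ⟨σ, hσ, hrep⟩
  let φ : MvPolynomial (Fin 4) ℝ →ₐ[ℝ] MvPolynomial (Fin 2) ℝ := aeval ![X 0 ^ 2, X 1 ^ 2, 1, 1]
  have hsq (b : Bool) (k : Fin 4) : IsSquare (φ (if b then X k else 1)) := by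
    cases b
    · simp
    · fin_cases k <;> simp [φ, IsSquare.sq]
  have hmotzkin : φ ((X 2)^2 * (X 3)^2 + (X 0)^2 * (X 1) * (X 3) + (X 0) * (X 1)^2 * (X 2)
      - 3 * (X 0) * (X 1) * (X 2) * (X 3)) = motzkin ℝ := by
    simp only [φ, motzkin, map_sub, map_add, map_mul, map_pow, map_ofNat, aeval_X,
      Matrix.cons_val]
    ring
  apply not_isSumSq_motzkin (R := ℝ)
  rw [← hmotzkin, hrep]
  simp only [map_sum, map_mul]
  exact IsSumSq.sum fun ν₁ _ => IsSumSq.sum fun ν₂ _ => IsSumSq.sum fun μ₁ _ =>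
    IsSumSq.sum fun μ₂ _ => IsSumSq.mul
      (((hsq ν₁ 0).mul (hsq ν₂ 1)).mul (hsq μ₁ 2) |>.mul (hsq μ₂ 3)).isSumSq
      ((hσ ν₁ ν₂ μ₁ μ₂).map φ.toRingHom)
end

section
/- The convex set S = {(x₁,x₂) ∈ ℝ² : x₁ ≥ 0, x₁² - x₁⁴ - x₂⁴ ≥ 0} equals the projection onto (x₁,x₂) of the set of (x₁,x₂,u₁,u₂) such that [[x₁-u₁, u₂],[u₂, x₁+u₁]] ⪰ 0, [[u₁, x₁],[x₁, 1]] ⪰ 0, and [[u₂, x₂],[x₂, 1]] ⪰ 0. -/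
/-!
With `u₁ = x₁²` and `u₂ = x₂²` the last two constraints are tight, and the first one says
`x₂⁴ ≤ (x₁ - x₁²)(x₁ + x₁²) = x₁² - x₁⁴`. Conversely the last two constraints force `u₁ ≥ x₁²` and
`u₂ ≥ x₂²`, so `x₂⁴ ≤ u₂² ≤ x₁² - u₁² ≤ x₁² - x₁⁴`.
-/

open Matrix

theorem Matrix.posSemidef_fin_two_iff_forall {R : Type*} [CommRing R] [PartialOrder R]
    [StarRing R] [TrivialStar R] {a b c : R} :
    (!![a, b; b, c] : Matrix (Fin 2) (Fin 2) R).PosSemidef ↔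
      ∀ s t : R, 0 ≤ a * s ^ 2 + 2 * b * s * t + c * t ^ 2 := by
  have hherm : (!![a, b; b, c] : Matrix (Fin 2) (Fin 2) R).IsHermitian := by
    ext i j; fin_cases i <;> fin_cases j <;> simp
  have hform (x : Fin 2 → R) :
      star x ⬝ᵥ (!![a, b; b, c] *ᵥ x) = a * x 0 ^ 2 + 2 * b * x 0 * x 1 + c * x 1 ^ 2 := by
    simp [dotProduct, Fin.sum_univ_two]; ring
  simp only [posSemidef_iff_dotProduct_mulVec, hherm, true_and, hform]
  exact ⟨fun h s t => by simpa using h ![s, t], fun h x => h (x 0) (x 1)⟩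

section OrderedField

variable {K : Type*} [Field K] [LinearOrder K] [IsStrictOrderedRing K]

theorem forall_binary_quadratic_nonneg_iff {a b c : K} :
    (∀ s t : K, 0 ≤ a * s ^ 2 + 2 * b * s * t + c * t ^ 2) ↔
      0 ≤ a ∧ 0 ≤ c ∧ b ^ 2 ≤ a * c := by
  constructor
  · intro h
    have hdisc : discrim a (2 * b) c ≤ 0 := discrim_le_zero fun s => by
      simpa [sq, mul_assoc] using h s 1
    refine ⟨by simpa using h 1 0, by simpa using h 0 1, ?_⟩
    rw [discrim] at hdisc
    linarith
  · rintro ⟨ha, hc, hb⟩ s t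
    rcases ha.eq_or_lt with rfl | ha
    · obtain rfl : b = 0 := by nlinarith
      simpa using mul_nonneg hc (sq_nonneg t)
    · -- `a (a s² + 2 b s t + c t²) = (a s + b t)² + (a c - b²) t²`
      refine nonneg_of_mul_nonneg_right ?_ ha
      nlinarith [sq_nonneg (a * s + b * t), mul_nonneg (sub_nonneg.2 hb) (sq_nonneg t)]

theorem Matrix.posSemidef_fin_two_iff_s16 [StarRing K] [TrivialStar K] {a b c : K} :
    (!![a, b; b, c] : Matrix (Fin 2) (Fin 2) K).PosSemidef ↔ 0 ≤ a ∧ 0 ≤ c ∧ b ^ 2 ≤ a * c :=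
  posSemidef_fin_two_iff_forall.trans forall_binary_quadratic_nonneg_iff

end OrderedField

/-- SDP representation of the singular convex set `{x₁ ≥ 0, x₁² - x₁⁴ - x₂⁴ ≥ 0}`. -/
theorem sdp_representation_tacnode_quartic :
    {p : ℝ × ℝ | p.1 ≥ 0 ∧ p.1^2 - p.1^4 - p.2^4 ≥ 0}
      = {p : ℝ × ℝ | ∃ u₁ u₂ : ℝ,
          (!![p.1 - u₁, u₂; u₂, p.1 + u₁] : Matrix (Fin 2) (Fin 2) ℝ).PosSemidef ∧
          (!![u₁, p.1; p.1, 1] : Matrix (Fin 2) (Fin 2) ℝ).PosSemidef ∧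
          (!![u₂, p.2; p.2, 1] : Matrix (Fin 2) (Fin 2) ℝ).PosSemidef} := by
  ext ⟨x₁, x₂⟩
  simp only [Set.mem_ofPred_eq, posSemidef_fin_two_iff_s16, mul_one]
  constructor
  · rintro ⟨hx₁, hS⟩
    have hx₁_quartic : x₁ ^ 4 ≤ x₁ ^ 2 := by linarith [show 0 ≤ x₂ ^ 4 by positivity]
    have hx₁_le_one : x₁ ≤ 1 := by
      by_contra! h
      nlinarith [show 1 < x₁ ^ 2 by nlinarith]
    refine ⟨x₁ ^ 2, x₂ ^ 2, ⟨by nlinarith, by positivity, by nlinarith⟩,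
      ⟨by positivity, zero_le_one, le_rfl⟩, ⟨by positivity, zero_le_one, le_rfl⟩⟩
  · rintro ⟨u₁, u₂, ⟨hminus, hplus, hu₂_sq⟩, ⟨-, -, hu₁⟩, ⟨-, -, hu₂⟩⟩
    refine ⟨by linarith, sub_nonneg.2 ?_⟩
    have hx₁ : (x₁ ^ 2) ^ 2 ≤ u₁ ^ 2 := pow_le_pow_left₀ (sq_nonneg x₁) hu₁ 2
    have hx₂ : (x₂ ^ 2) ^ 2 ≤ u₂ ^ 2 := pow_le_pow_left₀ (sq_nonneg x₂) hu₂ 2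
    calc x₂ ^ 4 = (x₂ ^ 2) ^ 2 := by ring
      _ ≤ (x₁ - u₁) * (x₁ + u₁) := hx₂.trans hu₂_sq
      _ = x₁ ^ 2 - u₁ ^ 2 := by ring
      _ ≤ x₁ ^ 2 - x₁ ^ 4 := by linarith
end
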